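/- Let (X, Y, ⟨·,·⟩) be a dual pairing, n ≥ 2, and T ⊆ X × Y. A pair (x,y) ∈ X × Y satisfies φ⁽ⁿ⁻¹⁾_T(x,y) ≤ ⟨x,y⟩ if and only if (x,y) is n-monotonically related to T, i.e., for every (x₁,y₁),…,(xₙ₋₁,yₙ₋₁) ∈ T: ⟨x - xₙ₋₁, y⟩ + ∑ᵢ₌₂ⁿ⁻¹⟨xᵢ - xᵢ₋₁, yᵢ⟩ + ⟨x₁ - x, y₁⟩ ≥ 0. -/
import Mathlib


variable {X Y : Type*} [AddCommGroup X] [Module ℝ X] [AddCommGroup Y] [Module ℝ Y]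

/-- The `k`-th Fitzpatrick function of a relation `T ⊆ X × Y`. -/
noncomputable def fitz (b : X →ₗ[ℝ] Y →ₗ[ℝ] ℝ) (T : Set (X × Y)) (k : ℕ)
    (x : X) (y : Y) : EReal :=
  sSup {r : EReal | ∃ c : ℕ → X × Y, (∀ i ∈ Finset.Icc 1 k, c i ∈ T) ∧
    r = ((b (x - (c 1).1) (c 1).2
        + ∑ i ∈ Finset.Icc 2 k, b ((c (i - 1)).1 - (c i).1) (c i).2
        + b (c k).1 y : ℝ) : EReal)}

/-- `φ⁽ⁿ⁻¹⁾_T(x,y) ≤ ⟨x,y⟩` iff `(x,y)` is `n`-monotonically related to `T`. -/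
theorem fitz_le_iff_nMonotonicallyRelated (b : X →ₗ[ℝ] Y →ₗ[ℝ] ℝ)
    (T : Set (X × Y)) (n : ℕ) (hn : 2 ≤ n) (x : X) (y : Y) :
    fitz b T (n - 1) x y ≤ ((b x y : ℝ) : EReal) ↔
      ∀ c : ℕ → X × Y, (∀ i ∈ Finset.Icc 1 (n - 1), c i ∈ T) →
        0 ≤ b (x - (c (n - 1)).1) y
          + ∑ i ∈ Finset.Icc 2 (n - 1), b ((c i).1 - (c (i - 1)).1) (c i).2
          + b ((c 1).1 - x) (c 1).2 := by
  rw [fitz, sSup_le_iff]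
  constructor
  · intro h c hc
    have h1 := h _ ⟨c, hc, rfl⟩
    rw [EReal.coe_le_coe_iff] at h1
    simp only [map_sub, LinearMap.sub_apply, Finset.sum_sub_distrib] at h1 ⊢
    linarith
  · rintro h r ⟨c, hc, rfl⟩
    rw [EReal.coe_le_coe_iff]
    have h1 := h c hc
    simp only [map_sub, LinearMap.sub_apply, Finset.sum_sub_distrib] at h1 ⊢
    linarith
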